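/- Let X and Y be uniform binary random variables with joint pmf q(x,y) = (1-a)/2 if x = y and a/2 if x ≠ y, where a ∈ (0, 1/2]. Let G = X ⊕ Y (addition mod 2). Suppose U is a random variable jointly distributed with (X,Y) such that the Markov chains G - (U,X) - Y and G - (U,Y) - X hold. Then G is a deterministic function of U; in particular, I(G; U) = H(G) > 0, so there is no such U with I(G; U) = 0. -/

import Mathlib

open Finset

open Classical in
noncomputable def prob {Ω α : Type*} [Fintype Ω] (p : Ω → ℝ) (X : Ω → α) (x : α) : ℝ :=
  ∑ ω, if X ω = x then p ω else 0

noncomputable def H2 {Ω α : Type*} [Fintype Ω] [Fintype α] (p : Ω → ℝ) (X : Ω → α) : ℝ :=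
  -∑ x, prob p X x * Real.logb 2 (prob p X x)

noncomputable def condH {Ω α β : Type*} [Fintype Ω] [Fintype α] [Fintype β]
    (p : Ω → ℝ) (X : Ω → α) (Y : Ω → β) : ℝ :=
  -∑ x, ∑ y, prob p (fun ω => (X ω, Y ω)) (x, y) *
      Real.logb 2 (prob p (fun ω => (X ω, Y ω)) (x, y) / prob p Y y)

noncomputable def MI {Ω α β : Type*} [Fintype Ω] [Fintype α] [Fintype β]
    (p : Ω → ℝ) (X : Ω → α) (Y : Ω → β) : ℝ :=
  ∑ x, ∑ y, prob p (fun ω => (X ω, Y ω)) (x, y) *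
      Real.logb 2 (prob p (fun ω => (X ω, Y ω)) (x, y) / (prob p X x * prob p Y y))

noncomputable def condMI {Ω α β γ : Type*} [Fintype Ω] [Fintype α] [Fintype β] [Fintype γ]
    (p : Ω → ℝ) (X : Ω → α) (Y : Ω → β) (Z : Ω → γ) : ℝ :=
  ∑ x, ∑ y, ∑ z, prob p (fun ω => (X ω, Y ω, Z ω)) (x, y, z) *
      Real.logb 2 (prob p (fun ω => (X ω, Y ω, Z ω)) (x, y, z) * prob p Z z /
        (prob p (fun ω => (X ω, Z ω)) (x, z) * prob p (fun ω => (Y ω, Z ω)) (y, z)))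

def IsPMF {Ω : Type*} [Fintype Ω] (p : Ω → ℝ) : Prop :=
  (∀ ω, 0 ≤ p ω) ∧ ∑ ω, p ω = 1

def MarkovChain {Ω α β γ : Type*} [Fintype Ω] (p : Ω → ℝ)
    (A : Ω → α) (B : Ω → β) (C : Ω → γ) : Prop :=
  ∀ a b c, prob p (fun ω => (A ω, B ω, C ω)) (a, b, c) * prob p B b =
    prob p (fun ω => (A ω, B ω)) (a, b) * prob p (fun ω => (C ω, B ω)) (c, b)

section aux
variable {Ω α β : Type*} [Fintype Ω]

lemma prob_nonneg (p : Ω → ℝ) (hp : ∀ ω, 0 ≤ p ω) (X : Ω → α) (x : α) :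
    0 ≤ prob p X x := by
  classical
  unfold prob
  exact Finset.sum_nonneg fun ω _ => by split <;> simp [hp ω]

lemma le_prob (p : Ω → ℝ) (hp : ∀ ω, 0 ≤ p ω) (X : Ω → α) (ω : Ω) :
    p ω ≤ prob p X (X ω) := by
  classical
  unfold prob
  have := Finset.single_le_sum (f := fun ω' => if X ω' = X ω then p ω' else 0)
    (fun i _ => by split <;> simp [hp i]) (Finset.mem_univ ω)
  simpa using this

lemma prob_congr (p : Ω → ℝ) {V W : Ω → α} (h : ∀ ω, p ω ≠ 0 → V ω = W ω) (x : α) :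
    prob p V x = prob p W x := by
  classical
  unfold prob
  refine Finset.sum_congr rfl fun ω _ => ?_
  by_cases hω : p ω = 0
  · split <;> split <;> simp [hω]
  · rw [h ω hω]

lemma prob_eq_of_iff (p : Ω → ℝ) (V : Ω → α) (W : Ω → β) (x : α) (y : β)
    (h : ∀ ω, V ω = x ↔ W ω = y) : prob p V x = prob p W y := by
  classical
  unfold prob
  exact Finset.sum_congr rfl fun ω _ => by rw [show (V ω = x) = (W ω = y) from propext (h ω)]

lemma prob_le_prob (p : Ω → ℝ) (hp : ∀ ω, 0 ≤ p ω) (V : Ω → α) (W : Ω → β) (x : α) (y : β)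
    (h : ∀ ω, V ω = x → W ω = y) : prob p V x ≤ prob p W y := by
  classical
  unfold prob
  refine Finset.sum_le_sum fun ω _ => ?_
  by_cases hv : V ω = x
  · simp [hv, h ω hv]
  · simp only [hv, if_false]
    split <;> [exact hp ω; exact le_refl 0]

lemma prob_eq_zero (p : Ω → ℝ) (V : Ω → α) (x : α)
    (h : ∀ ω, p ω ≠ 0 → V ω ≠ x) : prob p V x = 0 := by
  classical
  unfold prob
  refine Finset.sum_eq_zero fun ω _ => ?_
  by_cases hω : p ω = 0
  · split <;> simp [hω]
  · simp [h ω hω]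

open Classical in
lemma prob_comp [Fintype α] (p : Ω → ℝ) (W : Ω → α) (φ : α → β) (b : β) :
    prob p (fun ω => φ (W ω)) b = ∑ a, if φ a = b then prob p W a else 0 := by
  classical
  simp only [prob]
  have : ∀ a : α, (if φ a = b then (∑ ω, if W ω = a then p ω else 0) else 0)
      = ∑ ω, if φ a = b then (if W ω = a then p ω else 0) else 0 := by
    intro a; split <;> simp
  simp_rw [this]
  rw [Finset.sum_comm]
  refine Finset.sum_congr rfl fun ω _ => ?_
  rw [Finset.sum_eq_single (W ω)]
  · split <;> simp
  · intro a _ ha; simp [Ne.symm ha]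
  · simp

lemma sum_prob_fst [Fintype α] (p : Ω → ℝ) (A : Ω → α) (B : Ω → β) (b : β) :
    ∑ a, prob p (fun ω => (A ω, B ω)) (a, b) = prob p B b := by
  classical
  unfold prob
  rw [Finset.sum_comm]
  refine Finset.sum_congr rfl fun ω _ => ?_
  by_cases h : B ω = b
  · simp [Prod.ext_iff, h]
  · simp [Prod.ext_iff, h]

end aux

lemma support_lemma {Ω 𝒰 : Type*} [Fintype Ω] [Fintype 𝒰] (p : Ω → ℝ)
    (hp : ∀ ω, 0 ≤ p ω) (A B : Ω → Bool) (U : Ω → 𝒰)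
    (h : condMI p (fun ω => Bool.xor (A ω) (B ω)) B (fun ω => (U ω, A ω)) = 0) :
    ∀ ω1 ω2, 0 < p ω1 → 0 < p ω2 → U ω1 = U ω2 → A ω1 = A ω2 → B ω1 = B ω2 := by
  classical
  have hcond : ∀ (g y : Bool) (z : 𝒰 × Bool), g = Bool.xor z.2 y →
      prob p (fun ω => (Bool.xor (A ω) (B ω), B ω, (U ω, A ω))) (g, y, z)
        = prob p (fun ω => (B ω, (U ω, A ω))) (y, z) := by
    intro g y z hg
    refine prob_eq_of_iff p _ _ _ _ fun ω => ?_
    simp only [Prod.mk.injEq]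
    constructor
    · rintro ⟨_, h1, h2⟩; exact ⟨h1, h2⟩
    · rintro ⟨h1, h2⟩
      have hA : A ω = z.2 := congrArg Prod.snd h2
      refine ⟨?_, h1, h2⟩
      rw [hg, hA, h1]
  have hzero : ∀ (g y : Bool) (z : 𝒰 × Bool), g ≠ Bool.xor z.2 y →
      prob p (fun ω => (Bool.xor (A ω) (B ω), B ω, (U ω, A ω))) (g, y, z) = 0 := by
    intro g y z hg
    refine prob_eq_zero p _ _ fun ω _ hc => ?_
    simp only [Prod.mk.injEq] at hc
    obtain ⟨h0, h1, h2⟩ := hc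
    have hA : A ω = z.2 := congrArg Prod.snd h2
    exact hg (by rw [← h0, hA, h1])
  have hle2 : ∀ (g y : Bool) (z : 𝒰 × Bool),
      prob p (fun ω => (Bool.xor (A ω) (B ω), B ω, (U ω, A ω))) (g, y, z)
        ≤ prob p (fun ω => (Bool.xor (A ω) (B ω), (U ω, A ω))) (g, z) := by
    intro g y z
    refine prob_le_prob p hp _ _ _ _ fun ω hω => ?_
    simp only [Prod.mk.injEq] at hω ⊢
    exact ⟨hω.1, hω.2.2⟩
  have hlez : ∀ (g : Bool) (z : 𝒰 × Bool),
      prob p (fun ω => (Bool.xor (A ω) (B ω), (U ω, A ω))) (g, z)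
        ≤ prob p (fun ω => (U ω, A ω)) z := by
    intro g z
    refine prob_le_prob p hp _ _ _ _ fun ω hω => ?_
    simp only [Prod.mk.injEq] at hω
    exact hω.2
  have hq3nn : ∀ (g y : Bool) (z : 𝒰 × Bool),
      0 ≤ prob p (fun ω => (Bool.xor (A ω) (B ω), B ω, (U ω, A ω))) (g, y, z) :=
    fun g y z => prob_nonneg p hp _ _
  have hTnn : ∀ (g y : Bool) (z : 𝒰 × Bool),
      0 ≤ prob p (fun ω => (Bool.xor (A ω) (B ω), B ω, (U ω, A ω))) (g, y, z) *
        Real.logb 2 (prob p (fun ω => (Bool.xor (A ω) (B ω), B ω, (U ω, A ω))) (g, y, z) *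
          prob p (fun ω => (U ω, A ω)) z /
          (prob p (fun ω => (Bool.xor (A ω) (B ω), (U ω, A ω))) (g, z) *
            prob p (fun ω => (B ω, (U ω, A ω))) (y, z))) := by
    intro g y z
    by_cases hg : g = Bool.xor z.2 y
    · rcases eq_or_lt_of_le (hq3nn g y z) with h0 | h0
      · rw [← h0]; simp
      · have h2 := lt_of_lt_of_le h0 (hle2 g y z)
        have hzpos := lt_of_lt_of_le h2 (hlez g z)
        refine mul_nonneg (le_of_lt h0) (Real.logb_nonneg one_lt_two ?_)
        rw [hcond g y z hg] at h0 ⊢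
        rw [one_le_div (by positivity)]
        have := hlez g z
        nlinarith
    · rw [hzero g y z hg]; simp
  have hT0 : ∀ (g y : Bool) (z : 𝒰 × Bool),
      prob p (fun ω => (Bool.xor (A ω) (B ω), B ω, (U ω, A ω))) (g, y, z) *
        Real.logb 2 (prob p (fun ω => (Bool.xor (A ω) (B ω), B ω, (U ω, A ω))) (g, y, z) *
          prob p (fun ω => (U ω, A ω)) z /
          (prob p (fun ω => (Bool.xor (A ω) (B ω), (U ω, A ω))) (g, z) *
            prob p (fun ω => (B ω, (U ω, A ω))) (y, z))) = 0 := by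
    have hsum := h
    unfold condMI at hsum
    intro g y z
    have h1 : ∀ g ∈ (univ : Finset Bool), (0:ℝ) ≤ ∑ y, ∑ z,
        prob p (fun ω => (Bool.xor (A ω) (B ω), B ω, (U ω, A ω))) (g, y, z) *
        Real.logb 2 (prob p (fun ω => (Bool.xor (A ω) (B ω), B ω, (U ω, A ω))) (g, y, z) *
          prob p (fun ω => (U ω, A ω)) z /
          (prob p (fun ω => (Bool.xor (A ω) (B ω), (U ω, A ω))) (g, z) *
            prob p (fun ω => (B ω, (U ω, A ω))) (y, z))) :=
      fun g _ => Finset.sum_nonneg fun y _ => Finset.sum_nonneg fun z _ => hTnn g y z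
    have hg := (Finset.sum_eq_zero_iff_of_nonneg h1).mp hsum g (mem_univ g)
    have hy := (Finset.sum_eq_zero_iff_of_nonneg
      (fun y _ => Finset.sum_nonneg fun z _ => hTnn g y z)).mp hg y (mem_univ y)
    exact (Finset.sum_eq_zero_iff_of_nonneg fun z _ => hTnn g y z).mp hy z (mem_univ z)
  -- main argument
  intro ω1 ω2 hp1 hp2 hU hA
  by_contra hB
  have hB2 : B ω2 = !B ω1 := by
    revert hB
    cases B ω1 <;> cases B ω2 <;> simp
  have hq3pos : 0 < prob p (fun ω => (Bool.xor (A ω) (B ω), B ω, (U ω, A ω)))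
      (Bool.xor (A ω1) (B ω1), B ω1, (U ω1, A ω1)) :=
    lt_of_lt_of_le hp1 (le_prob p hp (fun ω => (Bool.xor (A ω) (B ω), B ω, (U ω, A ω))) ω1)
  have h2pos := lt_of_lt_of_le hq3pos (hle2 _ (B ω1) (U ω1, A ω1))
  have hzpos := lt_of_lt_of_le h2pos (hlez _ (U ω1, A ω1))
  have hgz : Bool.xor (A ω1) (B ω1) = Bool.xor ((U ω1, A ω1) : 𝒰 × Bool).2 (B ω1) := rfl
  have hy' := hcond (Bool.xor (A ω1) (B ω1)) (B ω1) (U ω1, A ω1) hgz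
  have hT0' := hT0 (Bool.xor (A ω1) (B ω1)) (B ω1) (U ω1, A ω1)
  have hlog : Real.logb 2
      (prob p (fun ω => (Bool.xor (A ω) (B ω), B ω, (U ω, A ω)))
          (Bool.xor (A ω1) (B ω1), B ω1, (U ω1, A ω1)) *
        prob p (fun ω => (U ω, A ω)) (U ω1, A ω1) /
        (prob p (fun ω => (Bool.xor (A ω) (B ω), (U ω, A ω))) (Bool.xor (A ω1) (B ω1), (U ω1, A ω1)) *
          prob p (fun ω => (B ω, (U ω, A ω))) (B ω1, (U ω1, A ω1)))) = 0 := by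
    rcases mul_eq_zero.mp hT0' with h' | h'
    · exact absurd h' (ne_of_gt hq3pos)
    · exact h'
  have hrpos : 0 < prob p (fun ω => (Bool.xor (A ω) (B ω), B ω, (U ω, A ω)))
          (Bool.xor (A ω1) (B ω1), B ω1, (U ω1, A ω1)) *
        prob p (fun ω => (U ω, A ω)) (U ω1, A ω1) /
        (prob p (fun ω => (Bool.xor (A ω) (B ω), (U ω, A ω))) (Bool.xor (A ω1) (B ω1), (U ω1, A ω1)) *
          prob p (fun ω => (B ω, (U ω, A ω))) (B ω1, (U ω1, A ω1))) := by
    have h3 : 0 < prob p (fun ω => (B ω, (U ω, A ω))) (B ω1, (U ω1, A ω1)) := by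
      rw [← hy']; exact hq3pos
    rw [hy']
    exact div_pos (mul_pos h3 hzpos) (mul_pos h2pos h3)
  have hratio := Real.logb_eq_zero.mp hlog
  have heq : prob p (fun ω => (U ω, A ω)) (U ω1, A ω1)
      = prob p (fun ω => (Bool.xor (A ω) (B ω), (U ω, A ω))) (Bool.xor (A ω1) (B ω1), (U ω1, A ω1)) := by
    rcases hratio with h' | h' | h' | h' | h' | h'
    · norm_num at h'
    · norm_num at h'
    · norm_num at h'
    · exact absurd h' (ne_of_gt hrpos)
    · have h3 : 0 < prob p (fun ω => (B ω, (U ω, A ω))) (B ω1, (U ω1, A ω1)) := by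
        rw [← hy']; exact hq3pos
      rw [hy'] at h'
      rw [div_eq_one_iff_eq (ne_of_gt (mul_pos h2pos h3))] at h'
      refine mul_left_cancel₀ (ne_of_gt h3) ?_
      linear_combination h'
    · exfalso; rw [h'] at hrpos; norm_num at hrpos
  have hsplit := sum_prob_fst p (fun ω => Bool.xor (A ω) (B ω)) (fun ω => (U ω, A ω)) (U ω1, A ω1)
  rw [Fintype.sum_bool] at hsplit
  have hnot : prob p (fun ω => (Bool.xor (A ω) (B ω), (U ω, A ω)))
      (!(Bool.xor (A ω1) (B ω1)), (U ω1, A ω1)) = 0 := by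
    cases hgc : Bool.xor (A ω1) (B ω1) <;> rw [hgc] at heq <;> simp only [Bool.not_false, Bool.not_true] <;>
      linarith [hsplit, heq,
        prob_nonneg p hp (fun ω => (Bool.xor (A ω) (B ω), (U ω, A ω))) (false, ((U ω1, A ω1) : 𝒰 × Bool)),
        prob_nonneg p hp (fun ω => (Bool.xor (A ω) (B ω), (U ω, A ω))) (true, ((U ω1, A ω1) : 𝒰 × Bool))]
  have hval : (Bool.xor (A ω2) (B ω2), (U ω2, A ω2))
      = (!(Bool.xor (A ω1) (B ω1)), ((U ω1, A ω1) : 𝒰 × Bool)) := by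
    rw [hB2, ← hA, ← hU, Bool.xor_not]
  have hpos2 : 0 < prob p (fun ω => (Bool.xor (A ω) (B ω), (U ω, A ω)))
      (!(Bool.xor (A ω1) (B ω1)), (U ω1, A ω1)) := by
    rw [← hval]
    exact lt_of_lt_of_le hp2 (le_prob p hp (fun ω => (Bool.xor (A ω) (B ω), (U ω, A ω))) ω2)
  rw [hnot] at hpos2
  exact lt_irrefl 0 hpos2

/-- for the DSBS(a) source with a ∈ (0,1/2], any U with
G - (U,X) - Y and G - (U,Y) - X (G = X ⊕ Y) determines G; hence
I(G;U) = H(G) > 0, so no such U has I(G;U) = 0. -/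
theorem stmt4 {Ω 𝒰 : Type*} [Fintype Ω] [Fintype 𝒰]
    (p : Ω → ℝ) (hp : IsPMF p) (a : ℝ) (ha0 : 0 < a) (ha : a ≤ 1 / 2)
    (X Y : Ω → Bool) (U : Ω → 𝒰)
    (hdist : ∀ x y, prob p (fun ω => (X ω, Y ω)) (x, y) =
      if x = y then (1 - a) / 2 else a / 2)
    (h1 : condMI p (fun ω => Bool.xor (X ω) (Y ω)) Y (fun ω => (U ω, X ω)) = 0)
    (h2 : condMI p (fun ω => Bool.xor (X ω) (Y ω)) X (fun ω => (U ω, Y ω)) = 0) :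
    (∃ f : 𝒰 → Bool, ∀ ω, 0 < p ω → Bool.xor (X ω) (Y ω) = f (U ω)) ∧
      MI p (fun ω => Bool.xor (X ω) (Y ω)) U = H2 p (fun ω => Bool.xor (X ω) (Y ω)) ∧
      0 < H2 p (fun ω => Bool.xor (X ω) (Y ω)) := by
  classical
  obtain ⟨hpn, -⟩ := hp
  have claimA := support_lemma p hpn X Y U h1
  have h2' : condMI p (fun ω => Bool.xor (Y ω) (X ω)) X (fun ω => (U ω, Y ω)) = 0 := by
    have : (fun ω => Bool.xor (Y ω) (X ω)) = (fun ω => Bool.xor (X ω) (Y ω)) :=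
      funext fun ω => Bool.xor_comm _ _
    rw [this]; exact h2
  have claimB := support_lemma p hpn Y X U h2'
  -- G is constant on fibers of U over the support
  have hconst : ∀ ω1 ω2, 0 < p ω1 → 0 < p ω2 → U ω1 = U ω2 →
      Bool.xor (X ω1) (Y ω1) = Bool.xor (X ω2) (Y ω2) := by
    intro ω1 ω2 hp1 hp2 hU
    by_cases hx : X ω1 = X ω2
    · rw [hx, claimA ω1 ω2 hp1 hp2 hU hx]
    · have hy : Y ω1 ≠ Y ω2 := fun hy => hx (claimB ω1 ω2 hp1 hp2 hU hy)
      have hx2 : X ω2 = !X ω1 := by revert hx; cases X ω1 <;> cases X ω2 <;> simp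
      have hy2 : Y ω2 = !Y ω1 := by revert hy; cases Y ω1 <;> cases Y ω2 <;> simp
      rw [hx2, hy2]; simp
  -- define f
  set f : 𝒰 → Bool := fun u =>
    if h : ∃ ω, 0 < p ω ∧ U ω = u then Bool.xor (X h.choose) (Y h.choose) else false with hf
  have hfU : ∀ ω, 0 < p ω → Bool.xor (X ω) (Y ω) = f (U ω) := by
    intro ω hω
    have hex : ∃ ω', 0 < p ω' ∧ U ω' = U ω := ⟨ω, hω, rfl⟩
    rw [hf]
    simp only [dif_pos hex]
    exact hconst ω hex.choose hω hex.choose_spec.1 hex.choose_spec.2.symm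
  refine ⟨⟨f, hfU⟩, ?_, ?_⟩
  · -- MI = H2
    have hGf : ∀ g, prob p (fun ω => Bool.xor (X ω) (Y ω)) g
        = prob p (fun ω => f (U ω)) g := by
      intro g
      refine prob_congr p (fun ω hω => ?_) g
      exact hfU ω (lt_of_le_of_ne (hpn ω) (Ne.symm hω))
    have hGmarg : ∀ g, prob p (fun ω => Bool.xor (X ω) (Y ω)) g
        = ∑ u, if f u = g then prob p U u else 0 := by
      intro g; rw [hGf g, prob_comp]
      exact Finset.sum_congr rfl fun u _ => by by_cases h : f u = g <;> simp [h]
    have hGU : ∀ g u, prob p (fun ω => (Bool.xor (X ω) (Y ω), U ω)) (g, u)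
        = if f u = g then prob p U u else 0 := by
      intro g u
      have : prob p (fun ω => (Bool.xor (X ω) (Y ω), U ω)) (g, u)
          = prob p (fun ω => (f (U ω), U ω)) (g, u) := by
        refine prob_congr p (fun ω hω => ?_) _
        rw [hfU ω (lt_of_le_of_ne (hpn ω) (Ne.symm hω))]
      rw [this]
      by_cases hfu : f u = g
      · rw [if_pos hfu]
        refine prob_eq_of_iff p _ _ _ _ fun ω => ?_
        simp only [Prod.mk.injEq]
        constructor
        · rintro ⟨_, h2⟩; exact h2
        · intro h2; exact ⟨by rw [h2, hfu], h2⟩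
      · rw [if_neg hfu]
        refine prob_eq_zero p _ _ fun ω _ hc => ?_
        simp only [Prod.mk.injEq] at hc
        exact hfu (by rw [← hc.2, hc.1])
    unfold MI
    have step : ∀ g u, prob p (fun ω => (Bool.xor (X ω) (Y ω), U ω)) (g, u) *
        Real.logb 2 (prob p (fun ω => (Bool.xor (X ω) (Y ω), U ω)) (g, u) /
          (prob p (fun ω => Bool.xor (X ω) (Y ω)) g * prob p U u))
        = (if f u = g then prob p U u else 0) *
            (- Real.logb 2 (prob p (fun ω => Bool.xor (X ω) (Y ω)) g)) := by
      intro g u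
      rw [hGU g u]
      by_cases hfu : f u = g
      · rw [if_pos hfu]
        rcases eq_or_lt_of_le (prob_nonneg p hpn U u) with h0 | h0
        · rw [← h0]; ring
        · have hGpos : 0 < prob p (fun ω => Bool.xor (X ω) (Y ω)) g := by
            refine lt_of_lt_of_le h0 ?_
            calc prob p U u = prob p (fun ω => (Bool.xor (X ω) (Y ω), U ω)) (g, u) := by
                  rw [hGU g u, if_pos hfu]
              _ ≤ prob p (fun ω => Bool.xor (X ω) (Y ω)) g := by
                  refine prob_le_prob p hpn _ _ _ _ fun ω hω => ?_
                  simp only [Prod.mk.injEq] at hω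
                  exact hω.1
          rw [show prob p U u / (prob p (fun ω => Bool.xor (X ω) (Y ω)) g * prob p U u)
              = (prob p (fun ω => Bool.xor (X ω) (Y ω)) g)⁻¹ by
            rw [mul_comm, div_mul_cancel_left₀ (ne_of_gt h0)]]
          rw [Real.logb_inv]
      · rw [if_neg hfu]; ring
    simp_rw [step]
    have : ∀ g, ∑ u, (if f u = g then prob p U u else 0) *
        (- Real.logb 2 (prob p (fun ω => Bool.xor (X ω) (Y ω)) g))
        = prob p (fun ω => Bool.xor (X ω) (Y ω)) g *
            (- Real.logb 2 (prob p (fun ω => Bool.xor (X ω) (Y ω)) g)) := by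
      intro g
      rw [← Finset.sum_mul, ← hGmarg g]
    simp_rw [this]
    unfold H2
    rw [← Finset.sum_neg_distrib]
    exact Finset.sum_congr rfl fun g _ => by ring
  · -- H2 > 0
    have hGval : ∀ g, prob p (fun ω => Bool.xor (X ω) (Y ω)) g
        = if g then a else 1 - a := by
      intro g
      have := prob_comp p (fun ω => (X ω, Y ω)) (fun v => Bool.xor v.1 v.2) g
      rw [this]
      rw [Fintype.sum_prod_type]
      simp only [Fintype.sum_bool]
      rw [hdist, hdist, hdist, hdist]
      cases g <;> norm_num
    unfold H2
    rw [Fintype.sum_bool, hGval true, hGval false]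
    norm_num
    have h1a : 0 < 1 - a := by linarith
    have hlog1 : Real.logb 2 a < 0 := Real.logb_neg one_lt_two ha0 (by linarith)
    have hlog2 : Real.logb 2 (1 - a) ≤ 0 :=
      Real.logb_nonpos one_lt_two (le_of_lt h1a) (by linarith)
    nlinarith
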